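/- arXiv:2503.21849 — 2 statements merged into one kernel-verified Lean document; each statement's English description precedes it below -/
import Mathlib

section
/- Fix γ ∈ (0,1) and μ > 0. Let g be a concave traveling wave with speed v, support [L,0], phenotypic threshold s, and breakpoint d. Then for all x ≥ L: Φ_s[g](x) = 1 − γ − x − μ·max(s − x, 0) if x > 0; Φ_s[g](x) = 1 − γ + g(x) − μ·max(s − x, 0) if d ≤ x ≤ 0; and Φ_s[g](x) = 1 − γ + g(d) − (d − x) − μ·max(s − x, 0) if L ≤ x < d. -/
/-!
The traveling-wave identity at the first step reads `g z = π (Φ_s[g] (z + v))`. The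
sup-convolution `x ↦ sup_y g y - |x - y|` is finite (since `g` is somewhere finite and
`g 1 = −∞`) and 1-Lipschitz, so `Φ_s[g]` is a continuous real function, and `g` agrees on
`[L, 0]` with the continuous profile `f z = Φ_s[g] (z + v)`; continuity at the edges of the
support gives `f 0 = 0`. Since the penalty `μ · max (s - x) 0` is nonincreasing in `x`, `f` has
slope at least `-1`. Hence `y ↦ g y - |x - y|` is maximised at `y = 0` when `x > 0`, at `y = x`
when `d ≤ x ≤ 0`, and at `y = d` when `x < d`, by the slope conditions defining `d`.
-/

/-- `π(x) = x` if `x ≥ 0`, and `−∞` otherwise. -/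
noncomputable def piE (x : EReal) : EReal := if 0 ≤ x then x else ⊥

/-- Concavity for `ℝ ∪ {−∞}`-valued functions (modeled as `ℝ → EReal`). -/
def ConcaveE (h : ℝ → EReal) : Prop :=
  ∀ x x' t : ℝ, 0 ≤ t → t ≤ 1 →
    ((t : EReal) * h x + ((1 - t : ℝ) : EReal) * h x') ≤ h (t * x + (1 - t) * x')

/-- `Φ_ξ[g](x) = 1 − γ + sup_y ( g(y) − |x − y| ) − μ·max(ξ − x, 0)`. -/
noncomputable def Phi (γ μ : ℝ) (g : ℝ → EReal) (ξ x : ℝ) : EReal :=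
  ((1 - γ : ℝ) : EReal) + (⨆ y : ℝ, g y - ((|x - y| : ℝ) : EReal))
    - ((μ * max (ξ - x) 0 : ℝ) : EReal)

/-- The phenotypic threshold `s = sup{ ξ ∈ ℝ : sup_x Φ_ξ[g](x) ≥ γ }`. -/
noncomputable def sNext (γ μ : ℝ) (g : ℝ → EReal) : ℝ :=
  sSup {ξ : ℝ | (γ : EReal) ≤ ⨆ x : ℝ, Phi γ μ g ξ x}

/-- The deterministic dynamic: `g_n = π ∘ Φ_{s_n}[g_{n−1}]` with
`s_n = sNext γ μ g_{n−1}`. -/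
noncomputable def gIter (γ μ : ℝ) (g0 : ℝ → EReal) : ℕ → ℝ → EReal
  | 0 => g0
  | n + 1 => fun x =>
      piE (Phi γ μ (gIter γ μ g0 n) (sNext γ μ (gIter γ μ g0 n)) x)

/-- A concave `g` with `sup{x : g x > 0} = 0`, `L = inf{x : g x > 0} > −∞`
(and `g = −∞` outside `[L,0]`) is a traveling wave with speed `v` if the
dynamic has the effect of shifting `g` by `v` at every step. -/
def IsTravelingWave (γ μ : ℝ) (g : ℝ → EReal) (v L : ℝ) : Prop :=
  ConcaveE g ∧
  {x : ℝ | 0 < g x}.Nonempty ∧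
  BddBelow {x : ℝ | 0 < g x} ∧
  sSup {x : ℝ | 0 < g x} = 0 ∧
  sInf {x : ℝ | 0 < g x} = L ∧
  (∀ x : ℝ, x ∉ Set.Icc L 0 → g x = ⊥) ∧
  (∀ n : ℕ, 1 ≤ n → ∀ x : ℝ, gIter γ μ g n x = g (x - n * v))

/-- `d ∈ [L,0]` is the breakpoint of `g`: the slope of `g` is `> 1` on `(L,d)`
and `≤ 1` on `(d,0)`. -/
def IsBreakpoint (g : ℝ → EReal) (L d : ℝ) : Prop :=
  L ≤ d ∧ d ≤ 0 ∧
  (∀ a b : ℝ, L ≤ a → a < b → b ≤ d → g a + ((b - a : ℝ) : EReal) < g b) ∧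
  (∀ a b : ℝ, d ≤ a → a < b → b ≤ 0 → g b ≤ g a + ((b - a : ℝ) : EReal))

open Set

lemma EReal.sub_coe_le_sub_coe_add (A : EReal) {a b c : ℝ} (h : a ≤ b + c) :
    A - (b : EReal) ≤ (A - (a : EReal)) + (c : EReal) := by
  rw [sub_eq_add_neg, sub_eq_add_neg, add_assoc, ← EReal.coe_neg, ← EReal.coe_neg,
    ← EReal.coe_add]
  exact add_le_add_right (EReal.coe_le_coe_iff.2 (by linarith)) A

lemma piE_coe_of_nonneg {r : ℝ} (hr : 0 ≤ r) : piE r = r :=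
  if_pos (EReal.coe_nonneg.2 hr)

lemma piE_coe_of_neg {r : ℝ} (hr : r < 0) : piE r = ⊥ :=
  if_neg (by exact_mod_cast hr.not_ge)

lemma piE_le (x : EReal) : piE x ≤ x := by
  unfold piE
  split_ifs
  exacts [le_rfl, bot_le]

lemma piE_top : piE ⊤ = ⊤ :=
  if_pos le_top

lemma ConcaveE.ordConnected_pos {g : ℝ → EReal} (hg : ConcaveE g) :
    OrdConnected {x | 0 < g x} := by
  refine ⟨fun p hp q hq z ⟨hpz, hzq⟩ => ?_⟩
  rcases hpz.eq_or_lt with rfl | hpz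
  · exact hp
  have hpq : 0 < q - p := by linarith
  have ht0 : 0 ≤ (q - z) / (q - p) := div_nonneg (by linarith) hpq.le
  have ht1 : 0 < 1 - (q - z) / (q - p) := by
    rw [sub_pos, div_lt_one hpq]; linarith
  have hconv := hg p q _ ht0 (sub_nonneg.1 ht1.le)
  rw [show (q - z) / (q - p) * p + (1 - (q - z) / (q - p)) * q = z by field_simp; ring] at hconv
  refine lt_of_lt_of_le ?_ hconv
  calc (0 : EReal) < ((1 - (q - z) / (q - p) : ℝ) : EReal) * g q :=
        EReal.mul_pos (EReal.coe_pos.2 ht1) hq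
    _ ≤ _ := le_add_of_nonneg_left (EReal.mul_nonneg (EReal.coe_nonneg.2 ht0) hp.le)

noncomputable def supConvAbs (g : ℝ → EReal) (x : ℝ) : EReal :=
  ⨆ y : ℝ, g y - ((|x - y| : ℝ) : EReal)

lemma Phi_eq_supConvAbs (γ μ : ℝ) (g : ℝ → EReal) (ξ x : ℝ) :
    Phi γ μ g ξ x =
      ((1 - γ : ℝ) : EReal) + supConvAbs g x - ((μ * max (ξ - x) 0 : ℝ) : EReal) :=
  rfl

section supConvAbs

variable {g : ℝ → EReal}

lemma le_supConvAbs (g : ℝ → EReal) (x y : ℝ) :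
    g y - ((|x - y| : ℝ) : EReal) ≤ supConvAbs g x :=
  le_iSup (fun y => g y - ((|x - y| : ℝ) : EReal)) y

lemma supConvAbs_le_add_abs (g : ℝ → EReal) (x x' : ℝ) :
    supConvAbs g x ≤ supConvAbs g x' + ((|x - x'| : ℝ) : EReal) :=
  iSup_le fun y =>
    (EReal.sub_coe_le_sub_coe_add (g y) (by linarith [abs_sub_le x' x y, abs_sub_comm x' x])).trans
      (add_le_add_left (le_supConvAbs g x' y) _)

lemma supConvAbs_ne_bot {y : ℝ} (hy : g y ≠ ⊥) (x : ℝ) : supConvAbs g x ≠ ⊥ :=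
  ne_bot_of_le_ne_bot (by simp [sub_eq_add_neg, hy, ← EReal.coe_neg]) (le_supConvAbs g x y)

lemma supConvAbs_eq_top {x : ℝ} (hx : supConvAbs g x = ⊤) (x' : ℝ) : supConvAbs g x' = ⊤ := by
  by_contra hx'
  have := supConvAbs_le_add_abs g x x'
  rw [hx, top_le_iff] at this
  exact EReal.add_ne_top hx' (EReal.coe_ne_top _) this

lemma Phi_eq_coe_toReal (γ μ : ℝ) {ξ x : ℝ} (htop : supConvAbs g x ≠ ⊤)
    (hbot : supConvAbs g x ≠ ⊥) :
    Phi γ μ g ξ x = ((1 - γ + (supConvAbs g x).toReal - μ * max (ξ - x) 0 : ℝ) : EReal) := by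
  rw [Phi_eq_supConvAbs, ← EReal.coe_toReal htop hbot]
  norm_cast

lemma toReal_supConvAbs_le_add_abs {x x' : ℝ} (htop : ∀ x, supConvAbs g x ≠ ⊤)
    (hbot : ∀ x, supConvAbs g x ≠ ⊥) :
    (supConvAbs g x).toReal ≤ (supConvAbs g x').toReal + |x - x'| := by
  have h := supConvAbs_le_add_abs g x x'
  rwa [← EReal.coe_toReal (htop x) (hbot x), ← EReal.coe_toReal (htop x') (hbot x'),
    ← EReal.coe_add, EReal.coe_le_coe_iff] at h

lemma supConvAbs_eq_of_forall_le {f : ℝ → ℝ} {L R x y₀ : ℝ} (hgf : ∀ y ∈ Icc L R, g y = f y)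
    (hout : ∀ y ∉ Icc L R, g y = ⊥) (hy₀ : y₀ ∈ Icc L R)
    (hmax : ∀ y ∈ Icc L R, f y - |x - y| ≤ f y₀ - |x - y₀|) :
    supConvAbs g x = ((f y₀ - |x - y₀| : ℝ) : EReal) := by
  refine le_antisymm (iSup_le fun y => ?_) ?_
  · by_cases hy : y ∈ Icc L R
    · rw [hgf y hy, ← EReal.coe_sub]
      exact EReal.coe_le_coe_iff.2 (hmax y hy)
    · rw [hout y hy, EReal.bot_sub]
      exact bot_le
  · rw [EReal.coe_sub, ← hgf y₀ hy₀]
    exact le_supConvAbs g x y₀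

end supConvAbs

section Profile

variable {f : ℝ → ℝ} {x y z : ℝ}

lemma sub_abs_le_sub_abs_of_le_of_le (hslope : ∀ a b, a ≤ b → f a ≤ f b + (b - a))
    (hyz : y ≤ z) (hzx : z ≤ x) : f y - |x - y| ≤ f z - |x - z| := by
  rw [abs_of_nonneg (by linarith : 0 ≤ x - y), abs_of_nonneg (by linarith : 0 ≤ x - z)]
  linarith [hslope y z hyz]

lemma sub_abs_le_sub_abs_of_le_add (h : f y ≤ f z + (y - z)) (hxz : x ≤ z) :
    f y - |x - y| ≤ f z - |x - z| := by
  rw [abs_of_nonpos (by linarith : x - z ≤ 0)]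
  linarith [neg_abs_le (x - y)]

end Profile

lemma nonneg_on_Icc_of_eq_piE {g : ℝ → EReal} {φ : ℝ → ℝ} {L R : ℝ} (hφ : Continuous φ)
    (hgφ : ∀ z, g z = piE (φ z)) (hpos : ∀ z ∈ Ioo L R, 0 < g z) (hLR : L < R) :
    ∀ z ∈ Icc L R, 0 ≤ φ z := by
  have hIoo : Ioo L R ⊆ {z | 0 ≤ φ z} := fun z hz => by
    by_contra hneg
    have := hpos z hz
    rw [hgφ, piE_coe_of_neg (not_le.1 hneg)] at this
    exact not_lt_bot this
  rw [← closure_Ioo hLR.ne]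
  exact closure_minimal hIoo (isClosed_le continuous_const hφ)

lemma nonpos_of_eq_piE {g : ℝ → EReal} {φ : ℝ → ℝ} {R : ℝ} (hφ : Continuous φ)
    (hgφ : ∀ z, g z = piE (φ z)) (hbot : ∀ z, R < z → g z = ⊥) : φ R ≤ 0 := by
  have hIoi : Ioi R ⊆ {z | φ z ≤ 0} := fun z hz => by
    by_contra hpos
    have := hgφ z
    rw [hbot z hz, piE_coe_of_nonneg (not_le.1 hpos).le] at this
    exact EReal.coe_ne_bot _ this.symm
  exact closure_minimal hIoi (isClosed_le hφ continuous_const) (closure_Ioi R ▸ self_mem_Ici)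

section Breakpoint

variable {g : ℝ → EReal} {f : ℝ → ℝ} {L d : ℝ}

lemma IsBreakpoint.le_add_sub (hd : IsBreakpoint g L d) (hgf : ∀ y ∈ Icc L 0, g y = f y)
    {a b : ℝ} (ha : d ≤ a) (hab : a ≤ b) (hb : b ≤ 0) : f b ≤ f a + (b - a) := by
  rcases hab.eq_or_lt with rfl | hab
  · simp
  have h := hd.2.2.2 a b ha hab hb
  rwa [hgf a ⟨hd.1.trans ha, by linarith⟩, hgf b ⟨by linarith [hd.1], hb⟩, ← EReal.coe_add,
    EReal.coe_le_coe_iff] at h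

lemma IsBreakpoint.le_add_sub_breakpoint (hd : IsBreakpoint g L d)
    (hgf : ∀ y ∈ Icc L 0, g y = f y) {y : ℝ} (hy : y ∈ Icc L 0) : f y ≤ f d + (y - d) := by
  rcases lt_or_ge y d with hyd | hdy
  · have h := hd.2.2.1 y d hy.1 hyd le_rfl
    rw [hgf y hy, hgf d ⟨hd.1, hd.2.1⟩, ← EReal.coe_add, EReal.coe_lt_coe_iff] at h
    linarith
  · exact hd.le_add_sub hgf le_rfl hdy hy.2

end Breakpoint

section TravelingWave

variable {γ μ v L : ℝ} {g : ℝ → EReal}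

lemma IsTravelingWave.eq_bot_of_notMem (hg : IsTravelingWave γ μ g v L) {x : ℝ}
    (hx : x ∉ Icc L 0) : g x = ⊥ :=
  hg.2.2.2.2.2.1 x hx

lemma IsTravelingWave.piE_Phi (hg : IsTravelingWave γ μ g v L) (x : ℝ) :
    piE (Phi γ μ g (sNext γ μ g) x) = g (x - v) := by
  simpa [gIter] using hg.2.2.2.2.2.2 1 le_rfl x

lemma IsTravelingWave.pos_subset_Icc (hg : IsTravelingWave γ μ g v L) :
    {x | 0 < g x} ⊆ Icc L 0 := fun x hx => by
  by_contra h
  change 0 < g x at hx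
  rw [hg.eq_bot_of_notMem h] at hx
  exact not_lt_bot hx

lemma IsTravelingWave.Ioo_subset_pos (hg : IsTravelingWave γ μ g v L) :
    Ioo L 0 ⊆ {x | 0 < g x} := by
  have hbddA : BddAbove {x | 0 < g x} := ⟨0, fun x hx => (hg.pos_subset_Icc hx).2⟩
  obtain ⟨hconc, hne, hbdd, hsup, hinf, -⟩ := hg
  rw [← hsup, ← hinf]
  exact IsConnected.Ioo_csInf_csSup_subset ⟨hne, hconc.ordConnected_pos.isPreconnected⟩ hbdd hbddA

lemma IsTravelingWave.supConvAbs_ne_bot (hg : IsTravelingWave γ μ g v L) (x : ℝ) :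
    supConvAbs g x ≠ ⊥ :=
  let ⟨_, hx₀⟩ := hg.2.1
  _root_.supConvAbs_ne_bot (ne_bot_of_gt hx₀) x

lemma IsTravelingWave.supConvAbs_ne_top (hg : IsTravelingWave γ μ g v L) (x : ℝ) :
    supConvAbs g x ≠ ⊤ := by
  intro hx
  have h := hg.piE_Phi (1 + v)
  rw [Phi_eq_supConvAbs, supConvAbs_eq_top hx, EReal.coe_add_top, EReal.top_sub_coe, piE_top,
    add_sub_cancel_right, hg.eq_bot_of_notMem fun h1 => by linarith [h1.2]] at h
  exact top_ne_bot h

lemma IsTravelingWave.exists_profile (hμ : 0 ≤ μ) (hg : IsTravelingWave γ μ g v L) :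
    ∃ f : ℝ → ℝ, (∀ y ∈ Icc L 0, g y = f y) ∧ f 0 = 0 ∧
      ∀ a b, a ≤ b → f a ≤ f b + (b - a) := by
  set H := fun x => (supConvAbs g x).toReal
  have hH : ∀ x x', H x ≤ H x' + |x - x'| := fun _ _ =>
    toReal_supConvAbs_le_add_abs hg.supConvAbs_ne_top hg.supConvAbs_ne_bot
  set φ := fun z => 1 - γ + H (z + v) - μ * max (sNext γ μ g - (z + v)) 0
  have hφ : Continuous φ := by
    have : Continuous H := (LipschitzWith.of_le_add fun x x' => hH x x').continuous
    fun_prop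
  have hgφ : ∀ z, g z = piE (φ z) := fun z => by
    rw [← add_sub_cancel_right z v, ← hg.piE_Phi,
      Phi_eq_coe_toReal γ μ (hg.supConvAbs_ne_top _) (hg.supConvAbs_ne_bot _),
      add_sub_cancel_right]
  have hφ0 : φ 0 ≤ 0 :=
    nonpos_of_eq_piE hφ hgφ fun z hz => hg.eq_bot_of_notMem fun h => hz.not_ge h.2
  have hL : L < 0 := by
    obtain ⟨x₀, hx₀⟩ := hg.2.1
    have hx₀I := hg.pos_subset_Icc hx₀
    have hx₀0 : x₀ ≠ 0 := by
      rintro rfl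
      have : g 0 ≤ 0 := (hgφ 0).trans_le ((piE_le _).trans (EReal.coe_nonpos.2 hφ0))
      exact this.not_gt hx₀
    exact hx₀I.1.trans_lt (hx₀I.2.lt_of_ne hx₀0)
  have hφ_nonneg := nonneg_on_Icc_of_eq_piE hφ hgφ hg.Ioo_subset_pos hL
  refine ⟨φ, fun y hy => by rw [hgφ, piE_coe_of_nonneg (hφ_nonneg y hy)],
    hφ0.antisymm (hφ_nonneg 0 ⟨hL.le, le_rfl⟩), fun a b hab => ?_⟩
  have hHab := hH (a + v) (b + v)
  rw [abs_of_nonpos (by linarith)] at hHab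
  have hmax : μ * max (sNext γ μ g - (b + v)) 0 ≤ μ * max (sNext γ μ g - (a + v)) 0 :=
    mul_le_mul_of_nonneg_left (max_le_max (by linarith) le_rfl) hμ
  simp only [φ]
  linarith

end TravelingWave

theorem Phi_formula_general (γ μ : ℝ) (hμ : 0 < μ)
    (g : ℝ → EReal) (v L d : ℝ) (hg : IsTravelingWave γ μ g v L)
    (hd : IsBreakpoint g L d) :
    ∀ x : ℝ, L ≤ x →
      (0 < x → Phi γ μ g (sNext γ μ g) x =
        ((1 - γ - x - μ * max (sNext γ μ g - x) 0 : ℝ) : EReal)) ∧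
      (d ≤ x → x ≤ 0 → Phi γ μ g (sNext γ μ g) x =
        ((1 - γ : ℝ) : EReal) + g x - ((μ * max (sNext γ μ g - x) 0 : ℝ) : EReal)) ∧
      (x < d → Phi γ μ g (sNext γ μ g) x =
        ((1 - γ : ℝ) : EReal) + g d
          - (((d - x) + μ * max (sNext γ μ g - x) 0 : ℝ) : EReal)) := by
  obtain ⟨f, hgf, hf0, hslope⟩ := hg.exists_profile hμ.le
  have hout : ∀ y ∉ Icc L 0, g y = ⊥ := fun _ => hg.eq_bot_of_notMem
  have hdI : d ∈ Icc L 0 := ⟨hd.1, hd.2.1⟩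
  have h0I : (0 : ℝ) ∈ Icc L 0 := ⟨hd.1.trans hd.2.1, le_rfl⟩
  intro x hLx
  refine ⟨fun hx => ?_, fun hdx hx0 => ?_, fun hxd => ?_⟩
  · rw [Phi_eq_supConvAbs, supConvAbs_eq_of_forall_le hgf hout h0I
      fun y hy => sub_abs_le_sub_abs_of_le_of_le hslope hy.2 hx.le, hf0, sub_zero, zero_sub,
      abs_of_pos hx]
    norm_cast
  · rw [Phi_eq_supConvAbs, supConvAbs_eq_of_forall_le hgf hout ⟨hLx, hx0⟩ fun y hy => ?_,
      sub_self, abs_zero, sub_zero, hgf x ⟨hLx, hx0⟩]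
    rcases le_or_gt y x with hyx | hxy
    · exact sub_abs_le_sub_abs_of_le_of_le hslope hyx le_rfl
    · exact sub_abs_le_sub_abs_of_le_add (hd.le_add_sub hgf hdx hxy.le hy.2) le_rfl
  · rw [Phi_eq_supConvAbs, supConvAbs_eq_of_forall_le hgf hout hdI
      fun y hy => sub_abs_le_sub_abs_of_le_add (hd.le_add_sub_breakpoint hgf hy) hxd.le,
      hgf d hdI, abs_of_neg (sub_neg.2 hxd)]
    norm_cast
    ring_nf

/-- explicit formula for `Φ_s[g]` on `[L, ∞)` for a concave
traveling wave `g` with phenotypic threshold `s = sNext γ μ g` and breakpoint `d`. -/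
theorem Phi_formula (γ μ : ℝ) (hγ : γ ∈ Set.Ioo (0 : ℝ) 1) (hμ : 0 < μ)
    (g : ℝ → EReal) (v L d : ℝ) (hg : IsTravelingWave γ μ g v L)
    (hd : IsBreakpoint g L d) :
    ∀ x : ℝ, L ≤ x →
      (0 < x → Phi γ μ g (sNext γ μ g) x =
        ((1 - γ - x - μ * max (sNext γ μ g - x) 0 : ℝ) : EReal)) ∧
      (d ≤ x → x ≤ 0 → Phi γ μ g (sNext γ μ g) x =
        ((1 - γ : ℝ) : EReal) + g x - ((μ * max (sNext γ μ g - x) 0 : ℝ) : EReal)) ∧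
      (x < d → Phi γ μ g (sNext γ μ g) x =
        ((1 - γ : ℝ) : EReal) + g d
          - (((d - x) + μ * max (sNext γ μ g - x) 0 : ℝ) : EReal)) :=
  Phi_formula_general γ μ hμ g v L d hg hd
end

section
/- Fix γ ∈ (0,1) and μ > 0 with μ ≠ 1. Let g be a concave traveling wave with speed v, support [L,0] and phenotypic threshold s. Then v > 0; moreover if v > s then v = 1 − γ, while if v ≤ s then μ < 1 and v = (1 − γ − μ s)/(1 − μ). -/
/-!
For `x ≥ 0` the sup-convolution in `Φ` only sees the support `(-∞, 0]` of `g`, so with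
`c = ⨆ y, g y + y` the map `Φ_s[g]` is the explicit piecewise linear function
`1 - γ + c - x - μ (s - x)⁺` on `[0, ∞)`. The wave equation `g (· - v) = π ∘ Φ_s[g]` forces this
function to be negative to the right of `max v 0` and to agree with `g (· - v)` on `(0, v)`.

If `v ≤ 0`, the penalty term makes the wave contract, `g ≤ (1 - min μ 1) ⨆ g`, which is absurd.
If `v > 0`, `g` is affine near `0` with slope `-1` (if `s < v`) or `μ - 1` (if `v ≤ s`); concavity
identifies `c` with the intercept of this affine piece, and the sign condition at `v` then yields
the speed and `μ < 1`.
-/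

open Set

lemma piE_eq_bot_iff {t : EReal} : piE t = ⊥ ↔ t < 0 := by
  unfold piE
  split_ifs with h
  · exact iff_of_false (ne_bot_of_le_ne_bot EReal.zero_ne_bot h) (not_lt.2 h)
  · exact iff_of_true rfl (not_le.1 h)

lemma eq_of_piE_eq_of_pos {t b : EReal} (h : piE t = b) (hb : 0 < b) : t = b := by
  unfold piE at h
  split_ifs at h
  · exact h
  · exact absurd (h ▸ hb) not_lt_bot

lemma EReal.iSup_sub_coe {ι : Sort*} (f : ι → EReal) (r : ℝ) :
    (⨆ i, f i) - r = ⨆ i, (f i - r) := by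
  refine le_antisymm ?_ (iSup_le fun i => EReal.sub_le_sub (le_iSup f i) le_rfl)
  rw [EReal.sub_le_iff_le_add (.inl (EReal.coe_ne_bot r)) (.inl (EReal.coe_ne_top r))]
  refine iSup_le fun i => ?_
  calc f i = f i - r + r := EReal.sub_add_cancel.symm
    _ ≤ (⨆ i, (f i - r)) + r := add_le_add_left (le_iSup (fun i => f i - r) i) _

section Phi

variable {γ μ : ℝ} {g : ℝ → EReal} {ξ x : ℝ}

lemma Phi_le_coe {m : ℝ} (hM : ⨆ y, g y - ((|x - y| : ℝ) : EReal) ≤ m) :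
    Phi γ μ g ξ x ≤ ((1 - γ + m - μ * max (ξ - x) 0 : ℝ) : EReal) := by
  calc Phi γ μ g ξ x ≤ ((1 - γ : ℝ) : EReal) + m - ((μ * max (ξ - x) 0 : ℝ) : EReal) :=
        EReal.sub_le_sub (add_le_add le_rfl hM) le_rfl
    _ = _ := by norm_cast

lemma Phi_eq_coe {m : ℝ} (hM : ⨆ y, g y - ((|x - y| : ℝ) : EReal) = m) :
    Phi γ μ g ξ x = ((1 - γ + m - μ * max (ξ - x) 0 : ℝ) : EReal) := by
  rw [Phi, hM]; norm_cast

lemma Phi_eq_top (hM : ⨆ y, g y - ((|x - y| : ℝ) : EReal) = ⊤) : Phi γ μ g ξ x = ⊤ := by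
  rw [Phi, hM, EReal.coe_add_top, EReal.top_sub_coe]

lemma iSup_sub_abs_le_iSup : ⨆ y, g y - ((|x - y| : ℝ) : EReal) ≤ ⨆ y, g y :=
  iSup_mono fun y => by
    simpa using EReal.sub_le_sub (le_refl (g y)) (EReal.coe_nonneg.2 (abs_nonneg (x - y)))

lemma iSup_sub_abs_le_coe_sub {c : ℝ} (hc : ⨆ y, g y + (y : EReal) ≤ c) (x : ℝ) :
    ⨆ y, g y - ((|x - y| : ℝ) : EReal) ≤ ((c - x : ℝ) : EReal) := by
  refine iSup_le fun y => ?_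
  have hy : g y + y ≤ c := (le_iSup (fun y => g y + (y : EReal)) y).trans hc
  revert hy
  induction g y using EReal.rec with
  | bot => simp
  | coe p =>
    intro hy
    norm_cast at hy ⊢
    linarith [le_abs_self (x - y)]
  | top => simp

lemma iSup_sub_abs_eq_of_eq_bot (hbot : ∀ ⦃y⦄, 0 < y → g y = ⊥) (hx : 0 ≤ x) :
    ⨆ y, g y - ((|x - y| : ℝ) : EReal) = (⨆ y, g y + (y : EReal)) - x := by
  rw [EReal.iSup_sub_coe]
  refine iSup_congr fun y => ?_
  rcases le_or_gt y 0 with hy | hy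
  · rw [abs_of_nonneg (by linarith : 0 ≤ x - y)]
    induction g y using EReal.rec with
    | bot => simp
    | coe p => norm_cast; ring
    | top => rw [EReal.top_sub_coe, EReal.top_add_coe, EReal.top_sub_coe]
  · simp [hbot hy]

end Phi

section ConcaveE

variable {g : ℝ → EReal}

lemma ConcaveE.convex_pos (hcav : ConcaveE g) : Convex ℝ {x | 0 < g x} := by
  refine convex_iff_forall_pos.2 fun x hx x' hx' t t' ht ht' htt' => ?_
  obtain rfl : t' = 1 - t := by linarith
  refine lt_of_lt_of_le ?_ (hcav x x' t ht.le (by linarith))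
  simpa using EReal.add_pos (EReal.mul_pos (EReal.coe_pos.2 ht) hx)
    (EReal.mul_pos (EReal.coe_pos.2 ht') hx')

lemma ConcaveE.le_of_eq_affine (hcav : ConcaveE g) {α β t x x' : ℝ} (ht0 : 0 < t) (ht1 : t ≤ 1)
    (hx' : g x' = ((α + β * x' : ℝ) : EReal))
    (hz : g (t * x + (1 - t) * x') = ((α + β * (t * x + (1 - t) * x') : ℝ) : EReal)) :
    g x ≤ ((α + β * x : ℝ) : EReal) := by
  have h := hcav x x' t ht0.le ht1
  rw [hx', hz] at h
  revert h
  induction g x using EReal.rec with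
  | bot => simp
  | coe p =>
    intro h
    norm_cast at h ⊢
    nlinarith
  | top =>
    intro h
    rw [EReal.mul_top_of_pos (EReal.coe_pos.2 ht0), ← EReal.coe_mul, EReal.top_add_coe] at h
    exact absurd h (not_le.2 (EReal.coe_lt_top _))

lemma ConcaveE.le_of_eq_affine_on_Ioo (hcav : ConcaveE g) {a b α β : ℝ} (hab : a < b)
    (heq : ∀ u ∈ Ioo a b, g u = ((α + β * u : ℝ) : EReal)) (y : ℝ) :
    g y ≤ ((α + β * y : ℝ) : EReal) := by
  by_cases hy : y ∈ Ioo a b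
  · exact (heq y hy).le
  set m := (a + b) / 2 with hm_def
  have hm : m ∈ Ioo a b := ⟨by linarith, by linarith⟩
  have hd : (b - a) / 2 ≤ |y - m| := by
    by_contra! h
    exact hy ⟨by linarith [neg_abs_le (y - m)], by linarith [le_abs_self (y - m)]⟩
  -- push `y` towards the midpoint until it lands in `Ioo a b`, at distance `(b - a) / 4` from `m`
  set t := (b - a) / (4 * |y - m|) with ht_def
  have hd0 : 0 < |y - m| := by linarith
  have ht0 : 0 < t := div_pos (by linarith) (by linarith)
  have ht1 : t ≤ 1 := (div_le_one (by linarith)).2 (by linarith)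
  have hz : |t * y + (1 - t) * m - m| = (b - a) / 4 := by
    rw [show t * y + (1 - t) * m - m = t * (y - m) by ring, abs_mul, abs_of_pos ht0, ht_def]
    field_simp
  refine hcav.le_of_eq_affine ht0 ht1 (heq m hm) (heq _ ⟨?_, ?_⟩)
  · linarith [neg_abs_le (t * y + (1 - t) * m - m)]
  · linarith [le_abs_self (t * y + (1 - t) * m - m)]

lemma ConcaveE.iSup_add_eq_of_eq_affine (hcav : ConcaveE g) (hbot : ∀ ⦃y⦄, 0 < y → g y = ⊥)
    {a α β : ℝ} (ha : a < 0) (hβ : -1 ≤ β)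
    (heq : ∀ u ∈ Ioo a 0, g u = ((α + β * u : ℝ) : EReal)) :
    ⨆ y, g y + (y : EReal) = α := by
  refine le_antisymm (iSup_le fun y => ?_) ?_
  · rcases le_or_gt y 0 with hy | hy
    · calc g y + y ≤ ((α + β * y : ℝ) : EReal) + y :=
            add_le_add (hcav.le_of_eq_affine_on_Ioo ha heq y) le_rfl
        _ ≤ α := by norm_cast; nlinarith
    · simp [hbot hy]
  · have h0 : (0 : ℝ) ∈ closure (Ioo a 0) := by
      rw [closure_Ioo ha.ne]; exact right_mem_Icc.2 ha.le
    have hcont : Continuous fun u : ℝ => ((α + (β + 1) * u : ℝ) : EReal) :=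
      continuous_coe_real_ereal.comp (by fun_prop)
    have key := ContinuousWithinAt.closure_le h0 hcont.continuousWithinAt
      continuousWithinAt_const fun u hu =>
        le_iSup_of_le (f := fun y => g y + (y : EReal)) u
          (le_of_eq (by rw [heq u hu, ← EReal.coe_add]; ring_nf))
    simpa using key

end ConcaveE

/-- The value of `Φ_s[g]` on `[0, ∞)` when `g = ⊥` on `(0, ∞)` and `⨆ y, g y + y = c`. -/
def phiRight (γ μ s c x : ℝ) : ℝ := 1 - γ + (c - x) - μ * max (s - x) 0

lemma continuous_phiRight (γ μ s c : ℝ) : Continuous (phiRight γ μ s c) := by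
  unfold phiRight; fun_prop

namespace IsTravelingWave

variable {γ μ v L : ℝ} {g : ℝ → EReal}

lemma wave_eq (hg : IsTravelingWave γ μ g v L) (x : ℝ) :
    piE (Phi γ μ g (sNext γ μ g) x) = g (x - v) := by
  simpa [gIter] using hg.2.2.2.2.2.2 1 le_rfl x

lemma eq_bot_of_pos (hg : IsTravelingWave γ μ g v L) ⦃y : ℝ⦄ (hy : 0 < y) : g y = ⊥ :=
  hg.2.2.2.2.2.1 y fun h => not_le.2 hy h.2

lemma mem_Icc_of_pos (hg : IsTravelingWave γ μ g v L) {y : ℝ} (hy : 0 < g y) : y ∈ Icc L 0 := by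
  by_contra h
  rw [hg.2.2.2.2.2.1 y h] at hy
  exact not_lt_bot hy

lemma pos_of_mem_Ioo (hg : IsTravelingWave γ μ g v L) {u : ℝ} (hu : u ∈ Ioo L 0) : 0 < g u := by
  obtain ⟨hcav, hne, -, hsup, hinf, -⟩ := hg
  obtain ⟨y₁, hy₁, hy₁u⟩ := exists_lt_of_csInf_lt hne (hinf ▸ hu.1)
  obtain ⟨y₂, hy₂, huy₂⟩ := exists_lt_of_lt_csSup hne (hsup ▸ hu.2)
  exact hcav.convex_pos.ordConnected.out hy₁ hy₂ ⟨hy₁u.le, huy₂.le⟩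

lemma Phi_neg (hg : IsTravelingWave γ μ g v L) {x : ℝ} (hx : v < x) :
    Phi γ μ g (sNext γ μ g) x < 0 :=
  piE_eq_bot_iff.1 (by rw [hg.wave_eq, hg.eq_bot_of_pos (sub_pos.2 hx)])

lemma exists_iSup_add_eq (hg : IsTravelingWave γ μ g v L) :
    ∃ c : ℝ, ⨆ y, g y + (y : EReal) = c ∧ 0 ≤ c := by
  have hle : ∀ y, g y + y ≤ ⨆ y, g y + (y : EReal) := le_iSup fun y => g y + (y : EReal)
  obtain ⟨y₀, hy₀⟩ := hg.2.1
  have hbot : ⨆ y, g y + (y : EReal) ≠ ⊥ := by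
    refine ne_bot_of_le_ne_bot ?_ (hle y₀)
    exact (EReal.add_lt_add_right_coe (bot_lt_iff_ne_bot.2 (ne_bot_of_gt hy₀)) y₀).ne_bot
  have htop : ⨆ y, g y + (y : EReal) ≠ ⊤ := by
    intro htop
    have hx : 0 ≤ max v 0 + 1 := by positivity
    have hΦ := hg.Phi_neg (x := max v 0 + 1) (by linarith [le_max_left v 0])
    rw [Phi_eq_top (by rw [iSup_sub_abs_eq_of_eq_bot hg.eq_bot_of_pos hx, htop, EReal.top_sub_coe])]
      at hΦ
    exact not_top_lt hΦ
  refine ⟨_, (EReal.coe_toReal htop hbot).symm, ?_⟩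
  rw [← hg.2.2.2.1]
  refine csSup_le ⟨y₀, hy₀⟩ fun y (hy : 0 < g y) => ?_
  have hlt : (y : EReal) < g y + y := by simpa using EReal.add_lt_add_right_coe hy y
  rw [← EReal.coe_toReal htop hbot] at hle
  exact (EReal.coe_lt_coe_iff.1 (hlt.trans_le (hle y))).le

variable {c : ℝ}

lemma Phi_eq_phiRight (hg : IsTravelingWave γ μ g v L) (hc : ⨆ y, g y + (y : EReal) = c)
    {ξ x : ℝ} (hx : 0 ≤ x) : Phi γ μ g ξ x = phiRight γ μ ξ c x :=
  Phi_eq_coe (by rw [iSup_sub_abs_eq_of_eq_bot hg.eq_bot_of_pos hx, hc, EReal.coe_sub])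

lemma phiRight_nonpos (hg : IsTravelingWave γ μ g v L) (hc : ⨆ y, g y + (y : EReal) = c) :
    phiRight γ μ (sNext γ μ g) c (max v 0) ≤ 0 := by
  refine ContinuousWithinAt.closure_le (s := Ioi (max v 0)) (by simp)
    (continuous_phiRight ..).continuousWithinAt continuousWithinAt_const fun x hx => ?_
  have hx : max v 0 < x := hx
  have h := hg.Phi_neg (x := x) (lt_of_le_of_lt (le_max_left v 0) hx)
  rw [hg.Phi_eq_phiRight hc (by linarith [le_max_right v 0])] at h
  exact (EReal.coe_lt_coe_iff.1 h).le

lemma eq_phiRight (hg : IsTravelingWave γ μ g v L) (hc : ⨆ y, g y + (y : EReal) = c) {u : ℝ}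
    (hu : u ∈ Ioo (max L (-v)) 0) : g u = phiRight γ μ (sNext γ μ g) c (u + v) := by
  have hpos := hg.pos_of_mem_Ioo ⟨(le_max_left L (-v)).trans_lt hu.1, hu.2⟩
  have h := hg.wave_eq (u + v)
  rw [add_sub_cancel_right, hg.Phi_eq_phiRight hc (by linarith [le_max_right L (-v), hu.1])] at h
  exact (eq_of_piE_eq_of_pos h hpos).symm

lemma exists_iSup_eq (hg : IsTravelingWave γ μ g v L) (hc : ⨆ y, g y + (y : EReal) = c)
    (hc0 : 0 ≤ c) : ∃ G : ℝ, ⨆ y, g y = G ∧ 0 < G := by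
  obtain ⟨y₀, hy₀ : 0 < g y₀⟩ := hg.2.1
  have hL : L ≤ 0 := (hg.mem_Icc_of_pos hy₀).1.trans (hg.mem_Icc_of_pos hy₀).2
  have hgle : ∀ y, g y ≤ ((c - L : ℝ) : EReal) := by
    intro y
    rcases le_or_gt (g y) 0 with h | h
    · exact h.trans (EReal.coe_nonneg.2 (by linarith))
    · calc g y ≤ ⨆ z, g z - ((|y - z| : ℝ) : EReal) := le_iSup_of_le y (by simp)
        _ ≤ ((c - y : ℝ) : EReal) := iSup_sub_abs_le_coe_sub hc.le y
        _ ≤ ((c - L : ℝ) : EReal) :=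
          EReal.coe_le_coe_iff.2 (by linarith [(hg.mem_Icc_of_pos h).1])
  have hG := EReal.coe_toReal (ne_top_of_le_ne_top (EReal.coe_ne_top _) (iSup_le hgle))
    (ne_bot_of_le_ne_bot (ne_bot_of_gt hy₀) (le_iSup g y₀))
  refine ⟨_, hG.symm, EReal.coe_pos.1 ?_⟩
  rw [hG]
  exact hy₀.trans_le (le_iSup g y₀)

-- Interpolating the bounds `⨆ g` and `c - x` on the sup-convolution at `x ≤ 0` with weight
-- `θ = min μ 1` kills the dependence on `x`.
lemma le_mul_iSup_of_speed_nonpos (hg : IsTravelingWave γ μ g v L) (hγ : γ < 1) (hμ : 0 < μ)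
    (hv : v ≤ 0) (hc : ⨆ y, g y + (y : EReal) = c) (hc0 : 0 ≤ c) {G : ℝ}
    (hG : ⨆ y, g y = G) (hG0 : 0 ≤ G) (y : ℝ) :
    g y ≤ (((1 - min μ 1) * G : ℝ) : EReal) := by
  have h0 := hg.phiRight_nonpos hc
  rw [max_eq_right hv] at h0
  set s := sNext γ μ g
  have hs : 0 < s := by
    by_contra! hs
    simp only [phiRight, sub_zero, max_eq_right hs] at h0
    linarith
  have hA : 1 - γ + c - μ * s ≤ 0 := by
    simp only [phiRight, sub_zero, max_eq_left hs.le] at h0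
    linarith
  set θ := min μ 1
  have hθ : 0 < θ := lt_min hμ one_pos
  have hθ1 : θ ≤ 1 := min_le_right μ 1
  have hθμ : θ ≤ μ := min_le_left μ 1
  rcases le_or_gt (g y) 0 with h | h
  · exact h.trans (EReal.coe_nonneg.2 (mul_nonneg (by linarith) hG0))
  set x := y + v
  have hx : x ≤ 0 := by linarith [(hg.mem_Icc_of_pos h).2]
  have hΦ : Phi γ μ g s x = g y :=
    eq_of_piE_eq_of_pos (by simpa [x] using hg.wave_eq x) h
  have h₁ := Phi_le_coe (γ := γ) (μ := μ) (ξ := s) ((iSup_sub_abs_le_iSup (x := x)).trans hG.le)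
  have h₂ := Phi_le_coe (γ := γ) (μ := μ) (ξ := s) (iSup_sub_abs_le_coe_sub hc.le x)
  rw [hΦ, max_eq_left (by linarith : 0 ≤ s - x)] at h₁ h₂
  set P := 1 - γ + G - μ * (s - x)
  set Q := 1 - γ + (c - x) - μ * (s - x)
  refine ((le_min h₁ h₂).trans_eq (EReal.coe_strictMono.monotone.map_min (a := P)).symm).trans ?_
  rw [EReal.coe_le_coe_iff]
  calc min P Q ≤ (1 - θ) * P + θ * Q := by
        nlinarith [min_le_left P Q, min_le_right P Q]
    _ = (1 - γ + c - μ * s) + (1 - θ) * G - (1 - θ) * c + (μ - θ) * x := by ring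
    _ ≤ (1 - θ) * G := by
        nlinarith [mul_nonneg (sub_nonneg.2 hθ1) hc0,
          mul_nonpos_of_nonneg_of_nonpos (sub_nonneg.2 hθμ) hx]

lemma speed_pos (hg : IsTravelingWave γ μ g v L) (hγ : γ < 1) (hμ : 0 < μ) : 0 < v := by
  by_contra! hv
  obtain ⟨c, hc, hc0⟩ := hg.exists_iSup_add_eq
  obtain ⟨G, hG, hG0⟩ := hg.exists_iSup_eq hc hc0
  have hGle := iSup_le (hg.le_mul_iSup_of_speed_nonpos hγ hμ hv hc hc0 hG hG0.le)
  rw [hG, EReal.coe_le_coe_iff] at hGle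
  nlinarith [lt_min hμ one_pos]

lemma lower_lt_zero (hg : IsTravelingWave γ μ g v L) (hv : 0 < v) : L < 0 := by
  by_contra! hL
  obtain ⟨y₀, hy₀ : 0 < g y₀⟩ := hg.2.1
  obtain ⟨hLy, hy0⟩ := hg.mem_Icc_of_pos hy₀
  obtain rfl : y₀ = 0 := by linarith
  obtain ⟨c, hc, -⟩ := hg.exists_iSup_add_eq
  have h := hg.wave_eq v
  rw [sub_self, hg.Phi_eq_phiRight hc hv.le] at h
  have hnonpos := hg.phiRight_nonpos hc
  rw [max_eq_left hv.le] at hnonpos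
  have := EReal.coe_pos.1 ((eq_of_piE_eq_of_pos h hy₀).symm ▸ hy₀)
  linarith

lemma speed_eq_of_lt (hg : IsTravelingWave γ μ g v L) (hv : 0 < v) (hsv : sNext γ μ g < v) :
    v = 1 - γ := by
  obtain ⟨c, hc, -⟩ := hg.exists_iSup_add_eq
  have ha : max (max L (-v)) (sNext γ μ g - v) < 0 :=
    max_lt (max_lt (hg.lower_lt_zero hv) (by linarith)) (by linarith)
  have key := hg.1.iSup_add_eq_of_eq_affine hg.eq_bot_of_pos ha le_rfl
    (α := 1 - γ + c - v) fun u hu => ?_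
  · rw [hc, EReal.coe_eq_coe_iff] at key
    linarith
  · rw [hg.eq_phiRight hc ⟨(le_max_left _ _).trans_lt hu.1, hu.2⟩, phiRight,
      max_eq_right (by linarith [le_max_right (max L (-v)) (sNext γ μ g - v), hu.1])]
    congr 1
    ring

lemma speed_eq_of_le (hg : IsTravelingWave γ μ g v L) (hμ : 0 < μ) (hv : 0 < v)
    (hvs : v ≤ sNext γ μ g) : μ < 1 ∧ v = (1 - γ - μ * sNext γ μ g) / (1 - μ) := by
  obtain ⟨c, hc, -⟩ := hg.exists_iSup_add_eq
  set s := sNext γ μ g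
  have ha : max L (-v) < 0 := max_lt (hg.lower_lt_zero hv) (by linarith)
  have haff : ∀ u ∈ Ioo (max L (-v)) 0,
      g u = ((phiRight γ μ s c v + (μ - 1) * u : ℝ) : EReal) := by
    intro u hu
    rw [hg.eq_phiRight hc hu, phiRight, phiRight, max_eq_left (by linarith [hu.2]),
      max_eq_left (by linarith)]
    congr 1
    ring
  have hc_eq := hg.1.iSup_add_eq_of_eq_affine hg.eq_bot_of_pos ha (by linarith) haff
  rw [hc, EReal.coe_eq_coe_iff] at hc_eq
  have hnonpos := hg.phiRight_nonpos hc
  rw [max_eq_left hv.le] at hnonpos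
  have hu : max L (-v) / 2 ∈ Ioo (max L (-v)) 0 := ⟨by linarith, by linarith⟩
  have hpos := hg.pos_of_mem_Ioo ⟨(le_max_left L (-v)).trans_lt hu.1, hu.2⟩
  rw [haff _ hu] at hpos
  have hμ1 : μ < 1 := by
    by_contra! h
    nlinarith [EReal.coe_pos.1 hpos]
  refine ⟨hμ1, (eq_div_iff (by linarith)).2 ?_⟩
  rw [phiRight, max_eq_left (by linarith)] at hc_eq
  linarith

end IsTravelingWave

theorem travelingWave_speed_general (γ μ : ℝ) (hγ : γ ∈ Set.Ioo (0 : ℝ) 1)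
    (hμ : 0 < μ)
    (g : ℝ → EReal) (v L : ℝ) (hg : IsTravelingWave γ μ g v L) :
    0 < v ∧
    (sNext γ μ g < v → v = 1 - γ) ∧
    (v ≤ sNext γ μ g → μ < 1 ∧ v = (1 - γ - μ * sNext γ μ g) / (1 - μ)) := by
  have hv := hg.speed_pos hγ.2 hμ
  exact ⟨hv, hg.speed_eq_of_lt hv, hg.speed_eq_of_le hμ hv⟩

/-- a concave traveling wave has positive speed; moreover
`v = 1 − γ` if `v > s`, while if `v ≤ s` then `μ < 1` and
`v = (1 − γ − μ s)/(1 − μ)`, where `s = sNext γ μ g` is the phenotypic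
threshold. -/
theorem travelingWave_speed (γ μ : ℝ) (hγ : γ ∈ Set.Ioo (0 : ℝ) 1)
    (hμ : 0 < μ) (hμ1 : μ ≠ 1)
    (g : ℝ → EReal) (v L : ℝ) (hg : IsTravelingWave γ μ g v L) :
    0 < v ∧
    (sNext γ μ g < v → v = 1 - γ) ∧
    (v ≤ sNext γ μ g → μ < 1 ∧ v = (1 - γ - μ * sNext γ μ g) / (1 - μ)) :=
  travelingWave_speed_general γ μ hγ hμ g v L hg
end
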